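/- Let Λ be a group acting on a countable set X. If the unitary representation of Λ on ℓ²(X) given by (g·ξ)(x) = ξ(g⁻¹·x) admits a sequence of almost invariant unit vectors, then the action Λ ↷ X admits an invariant mean. Conversely, if Λ ↷ X admits an invariant mean, then ℓ²(X) admits almost invariant unit vectors. -/

import Mathlib

/-!
If `ξₙ` are almost invariant unit vectors, the probability densities `|ξₙ|²` have almost invariant
translates in `ℓ¹` (by Cauchy–Schwarz, `‖|ξ|² - |η|²‖₁ ≤ ‖ξ - η‖₂ ‖ξ + η‖₂`), and a limit of the
corresponding measures along an ultrafilter is an invariant mean.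

Conversely (Day), an invariant mean yields, for every finite family `γ` in `Λ` and `ε > 0`, a
probability density `f ∈ ℓ¹(X)` with `‖γᵢ • f - f‖₁ < ε`. Otherwise Hahn–Banach separates `0` from
the convex set of the tuples `(γᵢ • f - f)ᵢ`, and evaluating the separating functional on Dirac
masses gives bounded functions `hᵢ` with `∑ᵢ (hᵢ (γᵢ • x) - hᵢ x) ≥ δ > 0` for all `x`. This is
impossible, because integrating against the invariant mean annihilates each coboundary
`hᵢ ∘ (γᵢ •) - hᵢ` (after rounding `hᵢ` to finitely many values, so that the finitely additive
mean can integrate it). Square roots of such densities are almost invariant unit vectors, since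
`(√a - √b)² ≤ |a - b|`.
-/

/-- An invariant mean for an action `act : Λ → X → X`: a finitely additive,
action-invariant probability measure defined on all subsets of `X`. -/
structure InvMean {Λ X : Type*} (act : Λ → X → X) where
  m : Set X → ℝ
  nonneg : ∀ A : Set X, 0 ≤ m A
  total : m Set.univ = 1
  additive : ∀ A B : Set X, Disjoint A B → m (A ∪ B) = m A + m B
  invariant : ∀ (g : Λ) (A : Set X), m (act g '' A) = m A

open Set Filter Topology
open scoped ENNReal

local notation "ℓ¹(" X ")" => lp (fun _ : X => ℝ) 1

section ActionSums

variable {Λ X : Type*} [Group Λ] [MulAction Λ X]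

lemma Summable.comp_smul {E : Type*} [AddCommMonoid E] [TopologicalSpace E] {f : X → E}
    (hf : Summable f) (g : Λ) : Summable fun x => f (g • x) :=
  (Equiv.summable_iff (MulAction.toPerm g)).2 hf

lemma tsum_comp_smul {E : Type*} [AddCommMonoid E] [TopologicalSpace E] (f : X → E) (g : Λ) :
    ∑' x, f (g • x) = ∑' x, f x :=
  Equiv.tsum_eq (MulAction.toPerm g) f

lemma Memℓp.comp_smul {E : Type*} [NormedAddCommGroup E] {p : ℝ≥0∞} {f : X → E}
    (hf : Memℓp f p) (hp : 0 < p.toReal) (g : Λ) : Memℓp (fun x => f (g • x)) p :=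
  memℓp_gen ((hf.summable hp).comp_smul g)

end ActionSums

lemma summable_and_tsum_mul_le_sqrt_mul_sqrt {X : Type*} {f g : X → ℝ} (hf : ∀ x, 0 ≤ f x)
    (hg : ∀ x, 0 ≤ g x) (hf2 : Summable fun x => f x ^ 2) (hg2 : Summable fun x => g x ^ 2) :
    Summable (fun x => f x * g x) ∧
      ∑' x, f x * g x ≤ √(∑' x, f x ^ 2) * √(∑' x, g x ^ 2) := by
  simp only [Real.sqrt_eq_rpow, ← Real.rpow_two] at hf2 hg2 ⊢
  exact Real.summable_and_inner_le_Lp_mul_Lq_tsum_of_nonneg .two_two hf hg hf2 hg2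

lemma tsum_abs_norm_sq_sub_norm_sq_le {X E : Type*} [SeminormedAddCommGroup E] {u v : X → E}
    (hu : Summable fun x => ‖u x‖ ^ 2) (hv : Summable fun x => ‖v x‖ ^ 2) :
    ∑' x, |‖u x‖ ^ 2 - ‖v x‖ ^ 2| ≤
      √(∑' x, ‖u x - v x‖ ^ 2) * √(2 * ∑' x, ‖u x‖ ^ 2 + 2 * ∑' x, ‖v x‖ ^ 2) := by
  have hsum2 : Summable fun x => 2 * ‖u x‖ ^ 2 + 2 * ‖v x‖ ^ 2 :=
    (hu.mul_left 2).add (hv.mul_left 2)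
  have hsq : ∀ x, (‖u x‖ + ‖v x‖) ^ 2 ≤ 2 * ‖u x‖ ^ 2 + 2 * ‖v x‖ ^ 2 := fun x => by
    nlinarith [sq_nonneg (‖u x‖ - ‖v x‖)]
  have hdiff : ∀ x, ‖u x - v x‖ ^ 2 ≤ 2 * ‖u x‖ ^ 2 + 2 * ‖v x‖ ^ 2 := fun x =>
    (pow_le_pow_left₀ (norm_nonneg _) (norm_sub_le _ _) 2).trans (hsq x)
  have hpoint : ∀ x, |‖u x‖ ^ 2 - ‖v x‖ ^ 2| ≤ ‖u x - v x‖ * (‖u x‖ + ‖v x‖) := fun x => by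
    rw [sq_sub_sq, abs_mul, abs_of_nonneg (by positivity), mul_comm]
    exact mul_le_mul_of_nonneg_right (abs_norm_sub_norm_le _ _) (by positivity)
  obtain ⟨hsumm, hcs⟩ := summable_and_tsum_mul_le_sqrt_mul_sqrt (fun x => norm_nonneg (u x - v x))
    (fun x => by positivity) (hsum2.of_nonneg_of_le (fun _ => by positivity) hdiff)
    (hsum2.of_nonneg_of_le (fun _ => by positivity) hsq)
  calc ∑' x, |‖u x‖ ^ 2 - ‖v x‖ ^ 2|
      ≤ ∑' x, ‖u x - v x‖ * (‖u x‖ + ‖v x‖) :=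
        Summable.tsum_le_tsum hpoint (hsumm.of_nonneg_of_le (fun _ => abs_nonneg _) hpoint) hsumm
    _ ≤ _ := hcs
    _ ≤ _ := by
        gcongr
        rw [← tsum_mul_left, ← tsum_mul_left, ← Summable.tsum_add (hu.mul_left 2) (hv.mul_left 2)]
        exact Summable.tsum_le_tsum hsq (hsum2.of_nonneg_of_le (fun _ => by positivity) hsq)
          hsum2

lemma sq_sqrt_sub_sqrt_le_abs_sub {a b : ℝ} (ha : 0 ≤ a) (hb : 0 ≤ b) :
    (√a - √b) ^ 2 ≤ |a - b| := by
  rcases le_total b a with hba | hab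
  · rw [abs_of_nonneg (by linarith)]
    nlinarith [Real.sq_sqrt ha, Real.sq_sqrt hb, Real.sqrt_nonneg b, Real.sqrt_le_sqrt hba]
  · rw [abs_of_nonpos (by linarith)]
    nlinarith [Real.sq_sqrt ha, Real.sq_sqrt hb, Real.sqrt_nonneg a, Real.sqrt_le_sqrt hab]

theorem nonempty_invMean_of_tendsto {Λ X : Type*} {act : Λ → X → X} (μ : ℕ → Set X → ℝ)
    (hnonneg : ∀ n A, 0 ≤ μ n A) (htotal : ∀ n, μ n univ = 1)
    (hadd : ∀ n A B, Disjoint A B → μ n (A ∪ B) = μ n A + μ n B)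
    (hinv : ∀ g A, Tendsto (fun n => μ n (act g '' A) - μ n A) atTop (𝓝 0)) :
    Nonempty (InvMean act) := by
  obtain ⟨U, hU⟩ := Ultrafilter.exists_le (atTop : Filter ℕ)
  have hle_one : ∀ n A, μ n A ≤ 1 := fun n A => by
    have := hadd n A Aᶜ disjoint_compl_right
    rw [union_compl_self, htotal] at this
    linarith [hnonneg n Aᶜ]
  have hlim : ∀ A, ∃ c, Tendsto (fun n => μ n A) U (𝓝 c) := fun A => by
    obtain ⟨c, -, hc⟩ := isCompact_Icc.ultrafilter_le_nhds (U.map fun n => μ n A)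
      (le_principal_iff.2 (mem_map.2 (Eventually.of_forall fun n => ⟨hnonneg n A, hle_one n A⟩)))
    exact ⟨c, hc⟩
  choose m hm using hlim
  refine ⟨⟨m, fun A => ge_of_tendsto' (hm A) (hnonneg · A), ?_, fun A B hAB => ?_, fun g A => ?_⟩⟩
  · exact tendsto_nhds_unique (hm univ) (by simp only [htotal, tendsto_const_nhds])
  · exact tendsto_nhds_unique (hm (A ∪ B)) (by simpa only [hadd _ A B hAB] using (hm A).add (hm B))
  · exact tendsto_nhds_unique (hm (act g '' A))
      (by simpa using ((hinv g A).mono_left hU).add (hm A))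

section DensityMeasure

variable {X : Type*}

lemma tsum_indicator_union {a : X → ℝ} (ha : Summable a) {A B : Set X} (hAB : Disjoint A B) :
    ∑' x, (A ∪ B).indicator a x = ∑' x, A.indicator a x + ∑' x, B.indicator a x := by
  rw [indicator_union_of_disjoint hAB]
  exact (ha.indicator A).tsum_add (ha.indicator B)

lemma abs_tsum_indicator_smul_image_sub_le {Λ : Type*} [Group Λ] [MulAction Λ X] {a : X → ℝ}
    (ha : Summable a) (g : Λ) (A : Set X) :
    |∑' x, ((g • ·) '' A).indicator a x - ∑' x, A.indicator a x| ≤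
      ∑' x, |a x - a (g⁻¹ • x)| := by
  set gA := (g • ·) '' A
  have hshift : Summable fun x => a (g⁻¹ • x) := ha.comp_smul g⁻¹
  have hdiff : Summable fun x => |a x - a (g⁻¹ • x)| := (ha.sub hshift).abs
  have hind : ∀ x, ‖gA.indicator (fun y => a y - a (g⁻¹ • y)) x‖ ≤ |a x - a (g⁻¹ • x)| :=
    fun x => norm_indicator_le_norm_self _ x
  have hreindex : ∑' x, A.indicator a x = ∑' x, gA.indicator (fun y => a (g⁻¹ • y)) x := by
    have hset : gA = (g⁻¹ • ·) ⁻¹' A := by rw [Set.preimage_smul, inv_inv]; rfl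
    rw [← tsum_comp_smul (A.indicator a) g⁻¹, hset]
    exact tsum_congr fun x => (indicator_comp_right (g := a) (g⁻¹ • ·)).symm
  calc |∑' x, gA.indicator a x - ∑' x, A.indicator a x|
      = ‖∑' x, gA.indicator (fun y => a y - a (g⁻¹ • y)) x‖ := by
        rw [hreindex, indicator_sub, (ha.indicator _).tsum_sub (hshift.indicator _),
          Real.norm_eq_abs]
    _ ≤ ∑' x, ‖gA.indicator (fun y => a y - a (g⁻¹ • y)) x‖ :=
        norm_tsum_le_tsum_norm (hdiff.of_nonneg_of_le (fun _ => norm_nonneg _) hind)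
    _ ≤ ∑' x, |a x - a (g⁻¹ • x)| :=
        Summable.tsum_le_tsum hind (hdiff.of_nonneg_of_le (fun _ => norm_nonneg _) hind) hdiff

end DensityMeasure

section AlmostInvariantVectors

variable {Λ X : Type*} [Group Λ] [MulAction Λ X]

theorem nonempty_invMean_of_almost_invariant_vectors {ξ : ℕ → X → ℂ}
    (hℓ2 : ∀ n, Memℓp (ξ n) 2) (hunit : ∀ n, ∑' x, ‖ξ n x‖ ^ 2 = 1)
    (hinv : ∀ g : Λ, Tendsto (fun n => ∑' x, ‖ξ n x - ξ n (g⁻¹ • x)‖ ^ 2) atTop (𝓝 0)) :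
    Nonempty (InvMean fun (g : Λ) (x : X) => g • x) := by
  have hsum : ∀ n, Summable fun x => ‖ξ n x‖ ^ 2 := fun n => by
    simpa using (hℓ2 n).summable (by simp)
  refine nonempty_invMean_of_tendsto (fun n A => ∑' x, A.indicator (fun x => ‖ξ n x‖ ^ 2) x)
    (fun n A => tsum_nonneg fun x => indicator_nonneg (fun _ _ => by positivity) x)
    (fun n => by simpa using hunit n) (fun n A B hAB => tsum_indicator_union (hsum n) hAB)
    fun g A => ?_
  refine squeeze_zero_norm (a := fun n => 2 * √(∑' x, ‖ξ n x - ξ n (g⁻¹ • x)‖ ^ 2))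
    (fun n => ?_) (by simpa using ((hinv g).sqrt).const_mul 2)
  have hshift : ∑' x, ‖ξ n (g⁻¹ • x)‖ ^ 2 = 1 :=
    (tsum_comp_smul (fun x => ‖ξ n x‖ ^ 2) g⁻¹).trans (hunit n)
  rw [Real.norm_eq_abs]
  calc _ ≤ ∑' x, |‖ξ n x‖ ^ 2 - ‖ξ n (g⁻¹ • x)‖ ^ 2| :=
        abs_tsum_indicator_smul_image_sub_le (hsum n) g A
    _ ≤ _ := tsum_abs_norm_sq_sub_norm_sq_le (hsum n) ((hsum n).comp_smul g⁻¹)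
    _ = 2 * √(∑' x, ‖ξ n x - ξ n (g⁻¹ • x)‖ ^ 2) := by
        rw [hunit, hshift, show (2 * 1 + 2 * 1 : ℝ) = 2 ^ 2 by norm_num, Real.sqrt_sq two_pos.le,
          mul_comm]

end AlmostInvariantVectors

section SimpleIntegral

variable {X Y : Type*} {m : Set X → ℝ}

lemma map_empty_of_additive (hm : ∀ A B, Disjoint A B → m (A ∪ B) = m A + m B) : m ∅ = 0 := by
  simpa using hm ∅ ∅ (disjoint_empty _)

lemma map_preimage_finset_of_additive (hm : ∀ A B, Disjoint A B → m (A ∪ B) = m A + m B)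
    (π : X → Y) (t : Finset Y) : m (π ⁻¹' t) = ∑ y ∈ t, m (π ⁻¹' {y}) := by
  classical
  induction t using Finset.induction_on with
  | empty => simpa using map_empty_of_additive hm
  | insert a t ha ih =>
    rw [Finset.sum_insert ha, ← ih, Finset.coe_insert, insert_eq, preimage_union]
    exact hm _ _ (Disjoint.preimage π (by simpa using ha))

variable (m) in
/-- Integral of a finite-range function against a finitely additive `m`; junk value `0` when the
range is infinite. -/
noncomputable def simpleIntegral (f : X → ℝ) : ℝ := ∑ᶠ c : ℝ, c * m (f ⁻¹' {c})

lemma simpleIntegral_comp_of_map_preimage {σ : X → X} (hσ : ∀ A, m (σ ⁻¹' A) = m A)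
    (f : X → ℝ) : simpleIntegral m (f ∘ σ) = simpleIntegral m f := by
  simp only [simpleIntegral, preimage_comp, hσ]

variable (hm : ∀ A B, Disjoint A B → m (A ∪ B) = m A + m B)
include hm

/-- Linearity of `simpleIntegral` reduces to this, applied to a joint map `π`. -/
lemma simpleIntegral_comp (π : X → Y) (s : Finset Y) (hs : ∀ x, π x ∈ s) (G : Y → ℝ) :
    simpleIntegral m (G ∘ π) = ∑ y ∈ s, G y * m (π ⁻¹' {y}) := by
  classical
  have hsupp : (Function.support fun c => c * m ((G ∘ π) ⁻¹' {c})) ⊆ ↑(s.image G) := by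
    intro c hc
    by_contra hcs
    have hempty : (G ∘ π) ⁻¹' {c} = ∅ :=
      eq_empty_of_forall_notMem fun x hx => hcs (Finset.mem_image.2 ⟨π x, hs x, hx⟩)
    exact hc (by simp only [hempty, map_empty_of_additive hm, mul_zero])
  rw [simpleIntegral, finsum_eq_sum_of_support_subset _ hsupp]
  refine Finset.sum_image' _ fun y _ => ?_
  have hfiber : (G ∘ π) ⁻¹' {G y} = π ⁻¹' ↑(s.filter fun z => G z = G y) := by
    ext x; simp [hs x]
  rw [hfiber, map_preimage_finset_of_additive hm, Finset.mul_sum]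
  exact Finset.sum_congr rfl fun z hz => by rw [(Finset.mem_filter.1 hz).2]

lemma simpleIntegral_sub {f g : X → ℝ} (hf : (range f).Finite) (hg : (range g).Finite) :
    simpleIntegral m (f - g) = simpleIntegral m f - simpleIntegral m g := by
  have hs : ∀ x, (f x, g x) ∈ hf.toFinset ×ˢ hg.toFinset := fun x => by simp
  have hsub := simpleIntegral_comp hm _ _ hs fun p => p.1 - p.2
  have hfst := simpleIntegral_comp hm _ _ hs Prod.fst
  have hsnd := simpleIntegral_comp hm _ _ hs Prod.snd
  simp only [sub_mul, Finset.sum_sub_distrib] at hsub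
  exact hsub.trans (by rw [← hfst, ← hsnd]; rfl)

lemma simpleIntegral_sum {ι : Type*} [Fintype ι] {f : ι → X → ℝ}
    (hf : ∀ i, (range (f i)).Finite) :
    simpleIntegral m (∑ i, f i) = ∑ i, simpleIntegral m (f i) := by
  classical
  have hs : ∀ x, (fun i => f i x) ∈ Fintype.piFinset fun i => (hf i).toFinset :=
    fun x => by simp
  have hsum := simpleIntegral_comp hm _ _ hs fun y => ∑ i, y i
  have hterm : ∀ i, simpleIntegral m (f i) = _ := fun i =>
    simpleIntegral_comp hm _ _ hs fun y => y i
  rw [Finset.sum_congr rfl fun i _ => hterm i, Finset.sum_comm]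
  simp only [Finset.sum_mul] at hsum
  rw [← hsum]
  congr 1
  ext x
  simp

lemma mul_map_univ_le_simpleIntegral (h0 : ∀ A, 0 ≤ m A) {f : X → ℝ} (hf : (range f).Finite)
    {c : ℝ} (hc : ∀ x, c ≤ f x) : c * m univ ≤ simpleIntegral m f := by
  have hs : ∀ x, f x ∈ hf.toFinset := fun x => by simp
  have hunion : m univ = ∑ y ∈ hf.toFinset, m (f ⁻¹' {y}) := by
    rw [← map_preimage_finset_of_additive hm]
    congr
    ext x
    simp
  rw [hunion, Finset.mul_sum, show simpleIntegral m f = _ from simpleIntegral_comp hm f _ hs id]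
  refine Finset.sum_le_sum fun y hy => mul_le_mul_of_nonneg_right ?_ (h0 _)
  obtain ⟨x, rfl⟩ := (Set.Finite.mem_toFinset hf).1 hy
  exact hc x

end SimpleIntegral

lemma Set.Finite.range_sub {X : Type*} {f g : X → ℝ} (hf : (range f).Finite)
    (hg : (range g).Finite) : (range (f - g)).Finite :=
  (hf.sub hg).subset <| by rintro _ ⟨x, rfl⟩; exact Set.sub_mem_sub ⟨x, rfl⟩ ⟨x, rfl⟩

lemma Set.Finite.range_sum {X ι : Type*} [Fintype ι] {f : ι → X → ℝ}
    (hf : ∀ i, (range (f i)).Finite) : (range (∑ i, f i)).Finite := by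
  refine ((Set.Finite.pi hf).image fun y => ∑ i, y i).subset ?_
  rintro _ ⟨x, rfl⟩
  exact ⟨fun i => f i x, fun i _ => ⟨x, rfl⟩, by simp⟩

lemma exists_finite_range_le_lt_add {X : Type*} {f : X → ℝ} {C : ℝ} (hC : ∀ x, |f x| ≤ C)
    {ε : ℝ} (hε : 0 < ε) :
    ∃ f' : X → ℝ, (range f').Finite ∧ ∀ x, f' x ≤ f x ∧ f x < f' x + ε := by
  refine ⟨fun x => ε * ⌊f x / ε⌋, ?_, fun x => ⟨?_, ?_⟩⟩
  · refine ((Set.finite_Icc ⌊-C / ε⌋ ⌊C / ε⌋).image fun n : ℤ => ε * n).subset ?_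
    rintro _ ⟨x, rfl⟩
    have hx := abs_le.1 (hC x)
    exact ⟨_, ⟨Int.floor_le_floor (by gcongr; linarith), Int.floor_le_floor (by gcongr; linarith)⟩,
      rfl⟩
  · have := Int.floor_le (f x / ε)
    rw [le_div_iff₀ hε] at this
    linarith
  · have := Int.lt_floor_add_one (f x / ε)
    rw [div_lt_iff₀ hε] at this
    linarith

namespace InvMean

variable {Λ X : Type*} [Group Λ] [MulAction Λ X]

lemma map_preimage_smul (M : InvMean fun (g : Λ) (x : X) => g • x) (g : Λ) (A : Set X) :
    M.m ((g • ·) ⁻¹' A) = M.m A := by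
  rw [Set.preimage_smul, ← Set.image_smul]
  exact M.invariant g⁻¹ A

theorem exists_sum_sub_lt (M : InvMean fun (g : Λ) (x : X) => g • x) {ι : Type*} [Fintype ι]
    (γ : ι → Λ) {h : ι → X → ℝ} (hh : ∀ i, ∃ C, ∀ x, |h i x| ≤ C) {δ : ℝ} (hδ : 0 < δ) :
    ∃ x, ∑ i, (h i (γ i • x) - h i x) < δ := by
  by_contra! hge
  set ε := δ / (Fintype.card ι + 1)
  have hε : 0 < ε := by positivity
  choose C hC using hh
  choose h' hfin hh' using fun i => exists_finite_range_le_lt_add (hC i) hε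
  have hcoboundary : ∀ i, simpleIntegral M.m (h' i ∘ (γ i • ·) - h' i) = 0 := fun i => by
    rw [simpleIntegral_sub M.additive ((hfin i).subset (range_comp_subset_range _ _)) (hfin i),
      simpleIntegral_comp_of_map_preimage (M.map_preimage_smul (γ i)), sub_self]
  have hlower : ∀ x, δ - Fintype.card ι * ε ≤ (∑ i, (h' i ∘ (γ i • ·) - h' i)) x := fun x =>
    calc δ - Fintype.card ι * ε ≤ ∑ i, (h i (γ i • x) - h i x) - ∑ _i : ι, ε := by
          simp only [Finset.sum_const, Finset.card_univ, nsmul_eq_mul]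
          linarith [hge x]
      _ = ∑ i, (h i (γ i • x) - h i x - ε) := (Finset.sum_sub_distrib ..).symm
      _ ≤ ∑ i, (h' i (γ i • x) - h' i x) := Finset.sum_le_sum fun i _ => by
          linarith [(hh' i (γ i • x)).2, (hh' i x).1]
      _ = (∑ i, (h' i ∘ (γ i • ·) - h' i)) x := by simp
  have hfin_sum : ∀ i, (range (h' i ∘ (γ i • ·) - h' i)).Finite := fun i =>
    ((hfin i).subset (range_comp_subset_range _ _)).range_sub (hfin i)
  have hmean := mul_map_univ_le_simpleIntegral M.additive M.nonneg
    (Set.Finite.range_sum hfin_sum) hlower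
  rw [simpleIntegral_sum M.additive hfin_sum, Finset.sum_eq_zero fun i _ => hcoboundary i,
    M.total, mul_one] at hmean
  have : Fintype.card ι * ε < δ := by
    rw [mul_div_assoc', div_lt_iff₀ (by positivity)]
    linarith
  linarith

end InvMean

section Reiter

variable {Λ X : Type*} [Group Λ] [MulAction Λ X]

variable (X) in
noncomputable def lpOneTranslate (g : Λ) : ℓ¹(X) →ₗ[ℝ] ℓ¹(X) where
  toFun f := ⟨fun x => f (g⁻¹ • x), f.2.comp_smul (by simp) g⁻¹⟩
  map_add' _ _ := rfl
  map_smul' _ _ := rfl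

@[simp]
lemma lpOneTranslate_apply (g : Λ) (f : ℓ¹(X)) (x : X) :
    lpOneTranslate X g f x = f (g⁻¹ • x) := rfl

lemma lpOneTranslate_single [DecidableEq X] (g : Λ) (x : X) (a : ℝ) :
    lpOneTranslate X g (lp.single 1 x a) = (lp.single 1 (g • x) a : ℓ¹(X)) := by
  ext y
  simp only [lpOneTranslate_apply, lp.single_apply, Pi.single_apply, inv_smul_eq_iff]

lemma lpOne_norm_eq_tsum (f : ℓ¹(X)) : ‖f‖ = ∑' x, |f x| := by
  simp [lp.norm_eq_tsum_rpow (p := 1) (by simp) f]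

variable (X) in
def lpOneProbabilityDensities : Set ℓ¹(X) := {f | (∀ x, 0 ≤ f x) ∧ HasSum (⇑f) 1}

lemma convex_lpOneProbabilityDensities : Convex ℝ (lpOneProbabilityDensities X) := by
  rintro f ⟨hf0, hf1⟩ g ⟨hg0, hg1⟩ a b ha hb hab
  have hcoe : ⇑(a • f + b • g) = fun x => a * f x + b * g x := rfl
  refine ⟨fun x => ?_, ?_⟩
  · rw [hcoe]
    exact add_nonneg (mul_nonneg ha (hf0 x)) (mul_nonneg hb (hg0 x))
  · rw [hcoe, ← hab]
    simpa using (hf1.mul_left a).add (hg1.mul_left b)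

lemma lp_single_one_mem_lpOneProbabilityDensities [DecidableEq X] (x : X) :
    lp.single 1 x 1 ∈ lpOneProbabilityDensities X :=
  ⟨fun y => by simp [Pi.single_apply, apply_ite], by
    rw [lp.coeFn_single]; exact hasSum_pi_single x 1⟩

variable {ι : Type*} [Fintype ι]

variable (X) in
noncomputable def lpOneCoboundary (γ : ι → Λ) : ℓ¹(X) →ₗ[ℝ] (ι → ℓ¹(X)) :=
  LinearMap.pi fun i => lpOneTranslate X (γ i) - LinearMap.id

lemma InvMean.zero_mem_closure_lpOneCoboundary_image (M : InvMean fun (g : Λ) (x : X) => g • x)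
    (γ : ι → Λ) : 0 ∈ closure (lpOneCoboundary X γ '' lpOneProbabilityDensities X) := by
  classical
  by_contra h0
  obtain ⟨φ, u, hφ, hu⟩ := geometric_hahn_banach_closed_point
    (convex_lpOneProbabilityDensities.linear_image _).closure isClosed_closure h0
  rw [map_zero] at hu
  set h : ι → X → ℝ := fun i x => -φ (Pi.single i (lp.single 1 x 1))
  have hbdd : ∀ i, ∃ C, ∀ x, |h i x| ≤ C := fun i => ⟨‖φ‖, fun x => by
    simpa [h, Pi.norm_single, lp.norm_single] using φ.le_opNorm (Pi.single i (lp.single 1 x 1))⟩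
  obtain ⟨x, hx⟩ := M.exists_sum_sub_lt γ hbdd (δ := -u) (by linarith)
  have hsum : ∑ i, (h i (γ i • x) - h i x) = -φ (lpOneCoboundary X γ (lp.single 1 x 1)) := by
    conv_rhs => rw [← Finset.univ_sum_single (lpOneCoboundary X γ (lp.single 1 x 1))]
    simp only [h, lpOneCoboundary, lpOneTranslate_single, map_sum, Pi.single_sub, map_sub,
      LinearMap.pi_apply, LinearMap.sub_apply, LinearMap.id_apply, ← Finset.sum_neg_distrib]
    exact Finset.sum_congr rfl fun _ _ => by ring
  have := hφ _ (subset_closure ⟨_, lp_single_one_mem_lpOneProbabilityDensities x, rfl⟩)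
  linarith

theorem InvMean.exists_almost_invariant_density (M : InvMean fun (g : Λ) (x : X) => g • x)
    (γ : ι → Λ) {ε : ℝ} (hε : 0 < ε) :
    ∃ f : X → ℝ, (∀ x, 0 ≤ f x) ∧ HasSum f 1 ∧ ∀ i, ∑' x, |f ((γ i)⁻¹ • x) - f x| < ε := by
  obtain ⟨_, ⟨f, ⟨hf0, hf1⟩, rfl⟩, hf⟩ :=
    Metric.mem_closure_iff.1 (M.zero_mem_closure_lpOneCoboundary_image γ) ε hε
  refine ⟨f, hf0, hf1, fun i => ?_⟩
  rw [dist_zero_left] at hf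
  calc ∑' x, |f ((γ i)⁻¹ • x) - f x| = ‖lpOneCoboundary X γ f i‖ := by
        rw [lpOne_norm_eq_tsum]; rfl
    _ ≤ ‖lpOneCoboundary X γ f‖ := norm_le_pi_norm _ i
    _ < ε := hf

theorem InvMean.exists_reiter_sequence [Countable Λ] (M : InvMean fun (g : Λ) (x : X) => g • x) :
    ∃ f : ℕ → X → ℝ, (∀ n x, 0 ≤ f n x) ∧ (∀ n, HasSum (f n) 1) ∧
      ∀ g : Λ, Tendsto (fun n => ∑' x, |f n (g⁻¹ • x) - f n x|) atTop (𝓝 0) := by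
  obtain ⟨e, he⟩ := exists_surjective_nat Λ
  choose f hf0 hf1 hf using fun n : ℕ =>
    M.exists_almost_invariant_density (fun i : Fin (n + 1) => e i) (Nat.one_div_pos_of_nat (n := n))
  refine ⟨f, hf0, hf1, fun g => ?_⟩
  obtain ⟨N, rfl⟩ := he g
  refine squeeze_zero' (Eventually.of_forall fun n => tsum_nonneg fun x => abs_nonneg _)
    ((eventually_ge_atTop N).mono fun n hn => (hf n ⟨N, by omega⟩).le)
    tendsto_one_div_add_atTop_nhds_zero_nat

end Reiter

theorem almost_invariant_vectors_iff_invariant_mean_general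
    {Λ X : Type*} [Group Λ] [Countable Λ] [MulAction Λ X] :
    (∃ ξ : ℕ → X → ℂ, (∀ n, Memℓp (ξ n) 2) ∧
      (∀ n, ∑' x : X, ‖ξ n x‖ ^ 2 = 1) ∧
      (∀ g : Λ, Filter.Tendsto (fun n => ∑' x : X, ‖ξ n x - ξ n (g⁻¹ • x)‖ ^ 2)
        Filter.atTop (nhds 0))) ↔
    Nonempty (InvMean (fun (g : Λ) (x : X) => g • x)) := by
  refine ⟨fun ⟨ξ, hℓ2, hunit, hinv⟩ => nonempty_invMean_of_almost_invariant_vectors hℓ2 hunit hinv,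
    fun ⟨M⟩ => ?_⟩
  obtain ⟨f, hf0, hf1, hf⟩ := M.exists_reiter_sequence
  have hnorm : ∀ n x, ‖(√(f n x) : ℂ)‖ ^ 2 = f n x := fun n x => by
    rw [Complex.norm_real, Real.norm_eq_abs, sq_abs, Real.sq_sqrt (hf0 n x)]
  refine ⟨fun n x => √(f n x), fun n => memℓp_gen ?_, fun n => by simp_rw [hnorm, (hf1 n).tsum_eq],
    fun g => squeeze_zero (fun n => tsum_nonneg fun x => by positivity) (fun n => ?_) (hf g)⟩
  · simpa [hnorm, Real.sq_sqrt, hf0] using (hf1 n).summable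
  · have hsumm : Summable fun x => |f n (g⁻¹ • x) - f n x| :=
      (((hf1 n).summable.comp_smul g⁻¹).sub (hf1 n).summable).abs
    have hpoint : ∀ x, ‖(√(f n x) : ℂ) - √(f n (g⁻¹ • x))‖ ^ 2 ≤ |f n (g⁻¹ • x) - f n x| :=
      fun x => by
        rw [← Complex.ofReal_sub, Complex.norm_real, Real.norm_eq_abs, sq_abs, abs_sub_comm]
        exact sq_sqrt_sub_sqrt_le_abs_sub (hf0 n x) (hf0 n _)
    exact Summable.tsum_le_tsum hpoint (hsumm.of_nonneg_of_le (fun _ => by positivity) hpoint) hsumm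

/-- For a countable group `Λ` acting on a countable set `X`: the unitary representation
of `Λ` on `ℓ²(X)` given by `(g·ξ)(x) = ξ(g⁻¹·x)` admits a sequence of almost invariant
unit vectors if and only if the action `Λ ↷ X` admits an invariant mean. -/
theorem almost_invariant_vectors_iff_invariant_mean
    {Λ X : Type*} [Group Λ] [Countable Λ] [Countable X] [MulAction Λ X] :
    (∃ ξ : ℕ → X → ℂ, (∀ n, Memℓp (ξ n) 2) ∧
      (∀ n, ∑' x : X, ‖ξ n x‖ ^ 2 = 1) ∧
      (∀ g : Λ, Filter.Tendsto (fun n => ∑' x : X, ‖ξ n x - ξ n (g⁻¹ • x)‖ ^ 2)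
        Filter.atTop (nhds 0))) ↔
    Nonempty (InvMean (fun (g : Λ) (x : X) => g • x)) :=
  almost_invariant_vectors_iff_invariant_mean_general
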